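/- Let (X_1,W_1),...,(X_n,W_n) be independent copies of a random vector (X,W) with joint probability density f_{X,W}, where X is a nonnegative continuous random variable. Let φ: [0,∞) → (0,1] be continuous decreasing with φ(0) = 1, and set W_i(t) = W_i·φ(t). Fix 1 ≤ r ≤ n. Then the survival function of the minimum of the concomitants at time t = 0, D(s) = P{min(W_{[r:n]}(0), W_{[r+1:n]}(0), ..., W_{[n:n]}(0)) > s}, satisfies D(s) = n·C(n-1,r-1) · ∫_0^∞ F_X(x)^{r-1} · [P{X > x, W > s}]^{n-r} · (∫_s^∞ f_{X,W}(x,y) dy) dx. -/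

import Mathlib

open MeasureTheory ProbabilityTheory

open Classical in
/-- The `r`-th order statistic (r = 1, ..., n) of the values `v 0, ..., v (n-1)`:
the smallest `x` such that at least `r` of the values are `≤ x`. -/
noncomputable def orderStat {n : ℕ} (v : Fin n → ℝ) (r : ℕ) : ℝ :=
  sInf {x : ℝ | r ≤ (Finset.univ.filter (fun i => v i ≤ x)).card}

/-- `min(W_{[r:n]}, ..., W_{[n:n]})`: the minimum of the concomitants of the order
statistics of ranks `r, ..., n`. -/
noncomputable def concomMin {n : ℕ} (v w : Fin n → ℝ) (r : ℕ) : ℝ :=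
  sInf {y : ℝ | ∃ i, orderStat v r ≤ v i ∧ w i = y}

/-!
Since `φ 0 = 1`, the concomitants at time `0` are the `W_i` themselves. Almost surely the `X_i`
are pairwise distinct, and then `min(W_{[r:n]}, …, W_{[n:n]}) > s` is the disjoint union, over
the index `j` of `X_{r:n}` and the set `S` of the `r - 1` indices with smaller `X`, of the events
"`X_i < X_j` for `i ∈ S`, `X_i > X_j` and `W_i > s` for the other `i ≠ j`, and `W_j > s`".
There are `n · C(n-1, r-1)` such events, and by independence and Fubini (conditioning on
`(X_j, W_j) = (x, y)`) each has probability
`∫∫_{y > s} F_X(x)^{r-1} · P(X > x, W > s)^{n-r} · f(x, y) dy dx`.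
-/

open Finset

section OrderStatistics

theorem setOf_le_card_filter_eq_biUnion {ι β : Type*} [Fintype ι] (P : ι → β → Prop)
    [∀ i b, Decidable (P i b)] (r : ℕ) :
    {b | r ≤ #{i | P i b}} = ⋃ S ∈ powersetCard r univ, ⋂ i ∈ S, {b | P i b} := by
  ext b
  simp only [Set.mem_ofPred_eq, Set.mem_iUnion, Set.mem_iInter, mem_powersetCard, exists_prop]
  constructor
  · intro h
    obtain ⟨S, hS, hcard⟩ := exists_subset_card_eq h
    exact ⟨S, ⟨subset_univ S, hcard⟩, fun i hi => (mem_filter.1 (hS hi)).2⟩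
  · rintro ⟨S, ⟨-, rfl⟩, hS⟩
    exact card_le_card fun i hi => mem_filter.2 ⟨mem_univ i, hS i hi⟩

variable {n r : ℕ} (v : Fin n → ℝ)

theorem orderStat_le_iff (hr : 1 ≤ r) (hrn : r ≤ n) {x : ℝ} :
    orderStat v r ≤ x ↔ r ≤ #{i | v i ≤ x} := by
  have hclosed : IsClosed {x : ℝ | r ≤ #{i | v i ≤ x}} := by
    rw [setOf_le_card_filter_eq_biUnion (fun i x => v i ≤ x)]
    exact isClosed_biUnion_finset fun S _ => isClosed_biInter fun i _ => isClosed_Ici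
  have hbdd : BddBelow {x : ℝ | r ≤ #{i | v i ≤ x}} := by
    obtain ⟨b, hb⟩ := (Set.finite_range v).bddBelow
    refine ⟨b, fun x hx => ?_⟩
    obtain ⟨i, hi⟩ := card_pos.1 (Nat.lt_of_lt_of_le hr hx)
    exact (hb ⟨i, rfl⟩).trans (mem_filter.1 hi).2
  have hne : {x : ℝ | r ≤ #{i | v i ≤ x}}.Nonempty := by
    obtain ⟨b, hb⟩ := (Set.finite_range v).bddAbove
    refine ⟨b, ?_⟩
    rwa [Set.mem_ofPred_eq, filter_true_of_mem fun i _ => hb ⟨i, rfl⟩, card_univ,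
      Fintype.card_fin]
  constructor
  · intro h
    exact (hclosed.csInf_mem hne hbdd).trans
      (card_le_card fun i hi => mem_filter.2 ⟨mem_univ i, (mem_filter.1 hi).2.trans h⟩)
  · exact fun h => csInf_le hbdd h

theorem lt_concomMin_iff (hr : 1 ≤ r) (hrn : r ≤ n) (w : Fin n → ℝ) (s : ℝ) :
    s < concomMin v w r ↔ ∀ i, orderStat v r ≤ v i → s < w i := by
  have : Nonempty (Fin n) := ⟨⟨0, by omega⟩⟩
  obtain ⟨k, hk⟩ := Finite.exists_max v
  have hne : {y | ∃ i, orderStat v r ≤ v i ∧ w i = y}.Nonempty := by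
    refine ⟨w k, k, (orderStat_le_iff v hr hrn).2 ?_, rfl⟩
    rwa [filter_true_of_mem fun i _ => hk i, card_univ, Fintype.card_fin]
  have hfin : {y | ∃ i, orderStat v r ≤ v i ∧ w i = y}.Finite :=
    (Set.finite_range w).subset fun y ⟨i, _, hi⟩ => ⟨i, hi⟩
  rw [concomMin, hfin.lt_csInf_iff hne]
  constructor
  · exact fun h i hi => h _ ⟨i, hi, rfl⟩
  · rintro h _ ⟨i, hi, rfl⟩
    exact h i hi

end OrderStatistics

section ProductSlices

variable {α : Type*} [MeasurableSpace α]

theorem measurableSet_setOf_mem_and_forall_ne {ι : Type*} [Countable ι] (j : ι) {B : Set α}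
    (hB : MeasurableSet B) {R : ι → Set (α × α)} (hR : ∀ i, MeasurableSet (R i)) :
    MeasurableSet {p : ι → α | p j ∈ B ∧ ∀ i ≠ j, (p j, p i) ∈ R i} := by
  simp only [Set.ofPred_and, Set.ofPred_forall]
  exact (hB.preimage (measurable_pi_apply j)).inter <| .iInter fun i => .iInter fun _ =>
    (hR i).preimage ((measurable_pi_apply j).prodMk (measurable_pi_apply i))

theorem pi_setOf_mem_and_forall_ne {m : ℕ} (ν : Fin (m + 1) → Measure α)
    [∀ i, SigmaFinite (ν i)] (j : Fin (m + 1)) {B : Set α} (hB : MeasurableSet B)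
    {R : Fin (m + 1) → Set (α × α)} (hR : ∀ i, MeasurableSet (R i)) :
    Measure.pi ν {p | p j ∈ B ∧ ∀ i ≠ j, (p j, p i) ∈ R i}
      = ∫⁻ z in B, ∏ i ∈ univ.erase j, ν i (Prod.mk z ⁻¹' R i) ∂ν j := by
  have hmp := (measurePreserving_piFinSuccAbove ν j).symm
  rw [← hmp.measure_preimage_equiv, Measure.prod_apply
    ((MeasurableEquiv.piFinSuccAbove (fun _ => α) j).symm.measurable
      (measurableSet_setOf_mem_and_forall_ne j hB hR)), ← lintegral_indicator hB]
  refine lintegral_congr fun z => ?_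
  by_cases hz : z ∈ B
  · have hslice : Prod.mk z ⁻¹' ((MeasurableEquiv.piFinSuccAbove (fun _ => α) j).symm ⁻¹'
        {p | p j ∈ B ∧ ∀ i ≠ j, (p j, p i) ∈ R i})
        = Set.univ.pi fun l => Prod.mk z ⁻¹' R (j.succAbove l) := by
      ext q
      simp [hz, Fin.forall_iff_succAbove j]
    rw [hslice, Measure.pi_pi, Set.indicator_of_mem hz, ← compl_singleton,
      ← Fin.image_succAbove_univ, prod_image fun a _ b _ h => Fin.succAbove_right_injective h]
  · simp [hz]

end ProductSlices

section RankEvents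

theorem card_filter_lt_lt_card_filter_lt {ι α : Type*} [Fintype ι] [LinearOrder α]
    (x : ι → α) {i k : ι} (h : x i < x k) : #{l | x l < x i} < #{l | x l < x k} := by
  refine card_lt_card ⟨fun l hl => ?_, fun hsub => ?_⟩
  · exact mem_filter.2 ⟨mem_univ l, (mem_filter.1 hl).2.trans h⟩
  · exact lt_irrefl (x i) (mem_filter.1 (hsub (mem_filter.2 ⟨mem_univ i, h⟩))).2

variable {n r : ℕ} {s : ℝ}

def concomEvent (n r : ℕ) (s : ℝ) : Set (Fin n → ℝ × ℝ) :=
  {p | ∀ i, r ≤ #{k | (p k).1 ≤ (p i).1} → s < (p i).2}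

-- `w = (p j, p i)` pairs the observation at the pivot index `j` with the one at index `i`.
def rankRel (s : ℝ) (S : Finset (Fin n)) (i : Fin n) : Set ((ℝ × ℝ) × (ℝ × ℝ)) :=
  {w | if i ∈ S then w.2.1 < w.1.1 else w.1.1 < w.2.1 ∧ s < w.2.2}

theorem lt_concomMin_iff_mem_concomEvent (hr : 1 ≤ r) (hrn : r ≤ n) (s : ℝ)
    (p : Fin n → ℝ × ℝ) :
    s < concomMin (fun i => (p i).1) (fun i => (p i).2) r ↔ p ∈ concomEvent n r s := by
  simp only [lt_concomMin_iff _ hr hrn, orderStat_le_iff _ hr hrn]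
  rfl

def rankEvent (s : ℝ) (j : Fin n) (S : Finset (Fin n)) : Set (Fin n → ℝ × ℝ) :=
  {p | s < (p j).2 ∧ ∀ i ≠ j, (p j, p i) ∈ rankRel s S i}

theorem filter_lt_eq_of_mem_rankEvent {j : Fin n} {S : Finset (Fin n)} (hjS : j ∉ S)
    {p : Fin n → ℝ × ℝ} (hp : p ∈ rankEvent s j S) :
    ({k | (p k).1 < (p j).1} : Finset (Fin n)) = S := by
  ext k
  by_cases hkj : k = j
  · subst hkj
    simp [hjS]
  · have hk : if k ∈ S then _ else _ := hp.2 k hkj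
    split_ifs at hk with hkS
    · simp [hkS, hk]
    · simp [hkS, hk.1.le.not_gt]

theorem rankEvent_subset_concomEvent (hr : 1 ≤ r) {j : Fin n} {S : Finset (Fin n)} (hjS : j ∉ S)
    (hS : #S = r - 1) : rankEvent s j S ⊆ concomEvent n r s := by
  intro p hp i hi
  by_cases hij : i = j
  · exact hij ▸ hp.1
  · have h : if i ∈ S then _ else _ := hp.2 i hij
    split_ifs at h with hiS
    · have hle : #{k | (p k).1 ≤ (p i).1} ≤ #S := by
        rw [← filter_lt_eq_of_mem_rankEvent hjS hp]
        exact card_le_card fun k hk => mem_filter.2 ⟨mem_univ k, (mem_filter.1 hk).2.trans_lt h⟩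
      omega
    · exact h.2

theorem exists_mem_rankEvent (hr : 1 ≤ r) (hrn : r ≤ n) {p : Fin n → ℝ × ℝ}
    (hp : p ∈ concomEvent n r s) (hinj : Function.Injective fun k => (p k).1) :
    ∃ j, ∃ S ∈ powersetCard (r - 1) (univ.erase j), p ∈ rankEvent s j S := by
  set x : Fin n → ℝ := fun k => (p k).1
  let rank : Fin n → Fin n := fun i =>
    ⟨#{k | x k < x i},
      card_lt_univ_of_notMem (x := i) (by simp) |>.trans_eq (Fintype.card_fin n)⟩
  have hrank : Function.Injective rank := by
    intro i k hik
    by_contra hne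
    rcases (hinj.ne hne).lt_or_gt with h | h
    · exact (card_filter_lt_lt_card_filter_lt x h).ne (Fin.ext_iff.1 hik)
    · exact (card_filter_lt_lt_card_filter_lt x h).ne' (Fin.ext_iff.1 hik)
  obtain ⟨j, hj⟩ := (Finite.injective_iff_surjective.1 hrank) ⟨r - 1, by omega⟩
  set S : Finset (Fin n) := {k | x k < x j}
  have hjS : j ∉ S := by simp [S]
  have hcard : #S = r - 1 := Fin.ext_iff.1 hj
  have hle : r ≤ #{k | x k ≤ x j} := by
    calc r = #(insert j S) := by rw [card_insert_of_notMem hjS, hcard]; omega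
    _ ≤ _ := card_le_card fun k hk => by
      rcases mem_insert.1 hk with rfl | hk
      · simp
      · exact mem_filter.2 ⟨mem_univ k, (mem_filter.1 hk).2.le⟩
  refine ⟨j, S, mem_powersetCard.2 ⟨fun k hk => ?_, hcard⟩, hp j hle, fun i hij => ?_⟩
  · exact mem_erase.2 ⟨fun h => hjS (h ▸ hk), mem_univ k⟩
  · change if i ∈ S then _ else _
    split_ifs with hiS
    · exact (mem_filter.1 hiS).2
    · have hji : x j < x i :=
        (not_lt.1 fun h => hiS (mem_filter.2 ⟨mem_univ i, h⟩)).lt_of_ne (hinj.ne (Ne.symm hij))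
      exact ⟨hji, hp i (hle.trans (card_le_card fun k hk =>
        mem_filter.2 ⟨mem_univ k, (mem_filter.1 hk).2.trans hji.le⟩))⟩

theorem eq_of_mem_rankEvent {j j' : Fin n} {S S' : Finset (Fin n)} (hjS : j ∉ S)
    (hjS' : j' ∉ S') (hcard : #S = #S') {p : Fin n → ℝ × ℝ} (hp : p ∈ rankEvent s j S)
    (hp' : p ∈ rankEvent s j' S') : j = j' ∧ S = S' := by
  obtain rfl : j = j' := by
    by_contra hne
    have h : if j' ∈ S then _ else _ := hp.2 j' (Ne.symm hne)
    rw [← filter_lt_eq_of_mem_rankEvent hjS hp, ← filter_lt_eq_of_mem_rankEvent hjS' hp']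
      at hcard
    split_ifs at h
    · exact (card_filter_lt_lt_card_filter_lt (fun k => (p k).1) h).ne' hcard
    · exact (card_filter_lt_lt_card_filter_lt (fun k => (p k).1) h.1).ne hcard
  exact ⟨rfl, (filter_lt_eq_of_mem_rankEvent hjS hp).symm.trans
    (filter_lt_eq_of_mem_rankEvent hjS' hp')⟩

end RankEvents

section RankEventMeasures

variable {n r : ℕ}

theorem measurableSet_concomEvent (s : ℝ) : MeasurableSet (concomEvent n r s) := by
  have hE : concomEvent n r s
      = ⋂ i, ({p | r ≤ #{k | (p k).1 ≤ (p i).1}}ᶜ ∪ {p | s < (p i).2}) := by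
    ext p
    simp only [concomEvent, Set.mem_iInter, Set.mem_union, Set.mem_compl_iff, Set.mem_ofPred_eq,
      imp_iff_not_or]
  rw [hE]
  refine .iInter fun i => .union (.compl ?_) (measurableSet_lt measurable_const (by fun_prop))
  rw [setOf_le_card_filter_eq_biUnion fun k (p : Fin n → ℝ × ℝ) => (p k).1 ≤ (p i).1]
  exact Finset.measurableSet_biUnion _ fun S _ => Finset.measurableSet_biInter _ fun k _ =>
    measurableSet_le (by fun_prop) (by fun_prop)

theorem measurableSet_rankRel (s : ℝ) (S : Finset (Fin n)) (i : Fin n) :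
    MeasurableSet (rankRel s S i) := by
  by_cases hi : i ∈ S
  · simpa [rankRel, hi] using measurableSet_lt (by fun_prop) (by fun_prop)
  · simpa [rankRel, hi, Set.ofPred_and] using (measurableSet_lt (by fun_prop) (by fun_prop)).inter
      (measurableSet_lt measurable_const (by fun_prop))

theorem measurableSet_rankEvent (s : ℝ) {j : Fin n} {S : Finset (Fin n)} :
    MeasurableSet (rankEvent s j S) :=
  measurableSet_setOf_mem_and_forall_ne j (measurableSet_lt measurable_const measurable_snd)
    (measurableSet_rankRel s S)

variable {m : ℕ} (ν : Measure (ℝ × ℝ)) [SigmaFinite ν]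

theorem pi_rankEvent (s : ℝ) {j : Fin (m + 1)} {S : Finset (Fin (m + 1))}
    (hS : S ⊆ univ.erase j) :
    Measure.pi (fun _ => ν) (rankEvent s j S) = ∫⁻ z in {z | s < z.2},
      ν {q | q.1 < z.1} ^ #S * ν {q | z.1 < q.1 ∧ s < q.2} ^ (m - #S) ∂ν := by
  rw [show rankEvent s j S
      = {p | p j ∈ {z : ℝ × ℝ | s < z.2} ∧ ∀ i ≠ j, (p j, p i) ∈ rankRel s S i}
      from rfl,
    pi_setOf_mem_and_forall_ne _ j
    (measurableSet_lt measurable_const measurable_snd) (measurableSet_rankRel s S)]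
  refine lintegral_congr fun z => ?_
  have hslice : ∀ i, ν (Prod.mk z ⁻¹' rankRel s S i)
      = if i ∈ S then ν {q | q.1 < z.1} else ν {q | z.1 < q.1 ∧ s < q.2} := by
    intro i
    split_ifs with hi <;> simp [rankRel, hi]
  rw [prod_congr rfl fun i _ => hslice i, prod_ite, prod_const, prod_const, filter_mem_eq_inter,
    inter_eq_right.2 hS, filter_notMem_eq_sdiff, card_sdiff_of_subset hS,
    card_erase_of_mem (mem_univ j), card_univ, Fintype.card_fin, Nat.add_sub_cancel]

theorem pi_setOf_fst_eq_fst_eq_zero (hν : ∀ c, ν {q | q.1 = c} = 0) {j k : Fin (m + 1)}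
    (hjk : j ≠ k) : Measure.pi (fun _ => ν) {p | (p j).1 = (p k).1} = 0 := by
  let R : Fin (m + 1) → Set ((ℝ × ℝ) × (ℝ × ℝ)) := fun i =>
    {w | i = k → w.1.1 = w.2.1}
  have hR : ∀ i, MeasurableSet (R i) := by
    intro i
    by_cases hi : i = k
    · simpa [R, hi] using measurableSet_eq_fun (by fun_prop) (by fun_prop)
    · simp [R, hi]
  have hset : {p : Fin (m + 1) → ℝ × ℝ | (p j).1 = (p k).1}
      = {p | p j ∈ Set.univ ∧ ∀ i ≠ j, (p j, p i) ∈ R i} := by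
    ext p
    simp only [Set.mem_ofPred_eq, Set.mem_univ, true_and, R]
    exact ⟨fun h i _ hik => hik ▸ h, fun h => h k hjk.symm rfl⟩
  rw [hset, pi_setOf_mem_and_forall_ne _ j MeasurableSet.univ hR]
  refine (lintegral_congr fun z => prod_eq_zero (mem_erase.2 ⟨hjk.symm, mem_univ k⟩) ?_).trans
    lintegral_zero
  simpa [R, eq_comm] using hν z.1

theorem pi_setOf_not_injective_fst_eq_zero (hν : ∀ c, ν {q | q.1 = c} = 0) :
    Measure.pi (fun _ : Fin (m + 1) => ν) {p | ¬Function.Injective fun k => (p k).1} = 0 := by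
  have hties : Measure.pi (fun _ => ν)
      (⋃ j, ⋃ k, ⋃ (_ : j ≠ k), {p : Fin (m + 1) → ℝ × ℝ | (p j).1 = (p k).1}) = 0 :=
    measure_iUnion_null fun j => measure_iUnion_null fun k => measure_iUnion_null fun hjk =>
      pi_setOf_fst_eq_fst_eq_zero ν hν hjk
  refine measure_mono_null (fun p hp => ?_) hties
  obtain ⟨j, k, hjk, hne⟩ : ∃ j k, (p j).1 = (p k).1 ∧ j ≠ k := by
    simpa [Function.Injective] using hp
  exact Set.mem_iUnion₂.2 ⟨j, k, Set.mem_iUnion.2 ⟨hne, hjk⟩⟩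

theorem pi_concomEvent (hν : ∀ c, ν {q | q.1 = c} = 0) (hr : 1 ≤ r) (hrn : r ≤ n)
    (s : ℝ) :
    Measure.pi (fun _ : Fin n => ν) (concomEvent n r s)
      = n * (n - 1).choose (r - 1) * ∫⁻ z in {z | s < z.2},
          ν {q | q.1 < z.1} ^ (r - 1) * ν {q | z.1 < q.1 ∧ s < q.2} ^ (n - r) ∂ν := by
  obtain ⟨m, rfl⟩ : ∃ m, n = m + 1 := ⟨n - 1, by omega⟩
  set T := univ.sigma fun j : Fin (m + 1) => powersetCard (r - 1) (univ.erase j)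
  have hT : ∀ a ∈ T, a.2 ⊆ univ.erase a.1 ∧ #a.2 = r - 1 := fun a ha =>
    mem_powersetCard.1 (mem_sigma.1 ha).2
  have hnotMem : ∀ a ∈ T, a.1 ∉ a.2 := fun a ha h => (mem_erase.1 ((hT a ha).1 h)).1 rfl
  have hsub : ⋃ a ∈ T, rankEvent s a.1 a.2 ⊆ concomEvent (m + 1) r s :=
    Set.iUnion₂_subset fun a ha => rankEvent_subset_concomEvent hr (hnotMem a ha) (hT a ha).2
  have hsdiff : concomEvent (m + 1) r s \ ⋃ a ∈ T, rankEvent s a.1 a.2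
      ⊆ {p | ¬Function.Injective fun k => (p k).1} := by
    rintro p ⟨hp, hpT⟩ hinj
    obtain ⟨j, S, hS, hpS⟩ := exists_mem_rankEvent hr hrn hp hinj
    exact hpT (Set.mem_biUnion (x := ⟨j, S⟩) (mem_sigma.2 ⟨mem_univ j, hS⟩) hpS)
  have hdisj : (T : Set (Σ _ : Fin (m + 1), Finset (Fin (m + 1)))).PairwiseDisjoint
      fun a => rankEvent s a.1 a.2 := by
    intro a ha b hb hab
    refine Set.disjoint_left.2 fun p hpa hpb => hab ?_
    obtain ⟨h1, h2⟩ := eq_of_mem_rankEvent (hnotMem a ha) (hnotMem b hb)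
      ((hT a ha).2.trans (hT b hb).2.symm) hpa hpb
    exact Sigma.ext h1 (heq_of_eq h2)
  rw [← measure_eq_measure_of_null_sdiff hsub
      (measure_mono_null hsdiff (pi_setOf_not_injective_fst_eq_zero ν hν)),
    measure_biUnion_finset hdisj fun a _ => measurableSet_rankEvent s,
    sum_congr rfl fun a ha => by rw [pi_rankEvent ν s (hT a ha).1, (hT a ha).2],
    sum_const, card_sigma]
  simp only [card_powersetCard, card_erase_of_mem (mem_univ _), card_univ, Fintype.card_fin,
    sum_const, smul_eq_mul, nsmul_eq_mul, Nat.add_sub_cancel, show m - (r - 1) = m + 1 - r by omega]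
  push_cast
  ring

end RankEventMeasures

section DensityIntegrals

open ENNReal

theorem withDensity_volume_setOf_fst_eq (g : ℝ × ℝ → ℝ≥0∞) (c : ℝ) :
    (volume : Measure (ℝ × ℝ)).withDensity g {q | q.1 = c} = 0 := by
  refine withDensity_absolutelyContinuous _ _ ?_
  rw [show {q : ℝ × ℝ | q.1 = c} = {c} ×ˢ Set.univ by ext; simp, Measure.volume_eq_prod,
    Measure.prod_prod, Real.volume_singleton, zero_mul]

theorem measurable_measure_setOf_fst_lt (ν : Measure (ℝ × ℝ)) :
    Measurable fun x => ν {q | q.1 < x} :=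
  Monotone.measurable fun _ _ h => measure_mono fun _ hq => lt_of_lt_of_le hq h

theorem measurable_measure_setOf_lt_fst_and (ν : Measure (ℝ × ℝ)) (s : ℝ) :
    Measurable fun x => ν {q | x < q.1 ∧ s < q.2} :=
  Antitone.measurable fun _ _ h => measure_mono fun _ hq => ⟨h.trans_lt hq.1, hq.2⟩

theorem setOf_lt_snd_ae_eq_prod {ν : Measure (ℝ × ℝ)} {a : ℝ} (ha : ν {q | q.1 < a} = 0)
    (s : ℝ) : {z : ℝ × ℝ | s < z.2} =ᵐ[ν] Set.Ici a ×ˢ Set.Ioi s := by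
  refine ae_eq_set.2 ⟨measure_mono_null (fun z hz => ?_) ha, ?_⟩
  · exact show z.1 < a from not_le.1 fun h : a ≤ z.1 => hz.2 ⟨h, hz.1⟩
  · rw [Set.sdiff_eq_empty.2 fun z hz => hz.2, measure_empty]

variable {f : ℝ → ℝ → ℝ} {A B : Set ℝ}

theorem setLIntegral_prod_withDensity (hf : Measurable (Function.uncurry f))
    (hA : MeasurableSet A) (hB : MeasurableSet B) {K : ℝ → ℝ≥0∞} (hK : Measurable K) :
    ∫⁻ z in A ×ˢ B, K z.1 ∂(volume : Measure (ℝ × ℝ)).withDensity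
        (fun p => ENNReal.ofReal (f p.1 p.2))
      = ∫⁻ x in A, K x * ∫⁻ y in B, ENNReal.ofReal (f x y) := by
  have hg : Measurable fun p : ℝ × ℝ => ENNReal.ofReal (f p.1 p.2) :=
    ENNReal.measurable_ofReal.comp hf
  rw [setLIntegral_withDensity_eq_setLIntegral_mul _ (g := fun z => K z.1) hg
      (by fun_prop) (hA.prod hB),
    Measure.volume_eq_prod, ← Measure.prod_restrict,
    lintegral_prod _ (by fun_prop)]
  refine lintegral_congr fun x => ?_
  simp only [Pi.mul_apply]
  rw [← lintegral_const_mul _ hf.of_uncurry_left.ennreal_ofReal]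
  simp only [mul_comm]

theorem toReal_setLIntegral_prod_withDensity (hf : Measurable (Function.uncurry f))
    (hf_nonneg : ∀ x y, 0 ≤ f x y) {ν : Measure (ℝ × ℝ)} [IsFiniteMeasure ν]
    (hν : ν = (volume : Measure (ℝ × ℝ)).withDensity fun p => ENNReal.ofReal (f p.1 p.2))
    (hA : MeasurableSet A) (hB : MeasurableSet B) {K : ℝ → ℝ≥0∞} (hK : Measurable K)
    (hK_le : ∀ x, K x ≤ 1) :
    (∫⁻ z in A ×ˢ B, K z.1 ∂ν).toReal = ∫ x in A, (K x).toReal * ∫ y in B, f x y := by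
  subst hν
  rw [setLIntegral_prod_withDensity hf hA hB hK]
  set J : ℝ → ℝ≥0∞ := fun x => ∫⁻ y in B, ENNReal.ofReal (f x y)
  have hJ : Measurable J :=
    (ENNReal.measurable_ofReal.comp hf).lintegral_prod_right'
  have hJ_fin : ∫⁻ x in A, J x ≠ ∞ := by
    have h := setLIntegral_prod_withDensity hf hA hB measurable_const (K := 1)
    simp only [Pi.one_apply, one_mul, setLIntegral_one] at h
    exact h ▸ measure_ne_top _ _
  rw [← integral_toReal (f := fun x => K x * J x) (hK.mul hJ).aemeasurable]
  · refine integral_congr_ae (.of_forall fun x => ?_)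
    change (K x * J x).toReal = (K x).toReal * ∫ y in B, f x y
    rw [toReal_mul, integral_eq_lintegral_of_nonneg_ae (.of_forall (hf_nonneg x))
      (hf.of_uncurry_left.aestronglyMeasurable)]
  · filter_upwards [ae_lt_top hJ hJ_fin] with x hx
    exact (mul_le_of_le_one_left' (hK_le x)).trans_lt hx

theorem toReal_setLIntegral_setOf_lt_snd (hf : Measurable (Function.uncurry f))
    (hf_nonneg : ∀ x y, 0 ≤ f x y) {ν : Measure (ℝ × ℝ)} [IsProbabilityMeasure ν]
    (hν : ν = (volume : Measure (ℝ × ℝ)).withDensity fun p => ENNReal.ofReal (f p.1 p.2))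
    (hneg : ν {q | q.1 < 0} = 0) (s : ℝ) (a b : ℕ) :
    (∫⁻ z in {z | s < z.2}, ν {q | q.1 < z.1} ^ a * ν {q | z.1 < q.1 ∧ s < q.2} ^ b ∂ν
      ).toReal
      = ∫ x in Set.Ioi 0, (ν {q | q.1 < x}).toReal ^ a *
          (ν {q | x < q.1 ∧ s < q.2}).toReal ^ b * ∫ y in Set.Ioi s, f x y := by
  rw [setLIntegral_congr (setOf_lt_snd_ae_eq_prod hneg s),
    toReal_setLIntegral_prod_withDensity hf hf_nonneg hν measurableSet_Ici measurableSet_Ioi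
      (K := fun x => ν {q | q.1 < x} ^ a * ν {q | x < q.1 ∧ s < q.2} ^ b)
      (((measurable_measure_setOf_fst_lt ν).pow_const a).mul
        ((measurable_measure_setOf_lt_fst_and ν s).pow_const b))
      (fun x => mul_le_one' (pow_le_one' prob_le_one a) (pow_le_one' prob_le_one b)),
    integral_Ici_eq_integral_Ioi]
  simp only [toReal_mul, toReal_pow]

end DensityIntegrals

/-- with W_i(t) = W_i·φ(t), φ(0) = 1, the survival function of the minimum of
the concomitants at time t = 0,
  D(s) = P{min(W_{[r:n]}(0), ..., W_{[n:n]}(0)) > s},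
satisfies D(s) = n·C(n-1,r-1)·∫_0^∞ F_X(x)^{r-1}·[P{X>x, W>s}]^{n-r}·(∫_s^∞ f(x,y) dy) dx. -/
theorem statement9
    {Ω : Type*} [MeasurableSpace Ω] (μ : Measure Ω) [IsProbabilityMeasure μ]
    (n r : ℕ) (hr : 1 ≤ r) (hrn : r ≤ n)
    (X W : Fin n → Ω → ℝ)
    (hXmeas : ∀ i, Measurable (X i)) (hWmeas : ∀ i, Measurable (W i))
    (f : ℝ → ℝ → ℝ) (hf_nonneg : ∀ x y, 0 ≤ f x y)
    (hf_meas : Measurable (Function.uncurry f))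
    (hindep : iIndepFun (fun i ω => (X i ω, W i ω)) μ)
    (hlaw : ∀ i, Measure.map (fun ω => (X i ω, W i ω)) μ =
      (volume : Measure (ℝ × ℝ)).withDensity (fun p => ENNReal.ofReal (f p.1 p.2)))
    (hX_nonneg : ∀ i, ∀ᵐ ω ∂μ, 0 ≤ X i ω)
    (φ : ℝ → ℝ)
    (hφ0 : φ 0 = 1)
    (s : ℝ) :
    (μ {ω | s < concomMin (fun i => X i ω) (fun i => W i ω * φ 0) r}).toReal
      = (n : ℝ) * ((n - 1).choose (r - 1) : ℝ) *
        ∫ x in Set.Ioi (0 : ℝ),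
          (μ {ω | X ⟨0, by omega⟩ ω < x}).toReal ^ (r - 1) *
          (μ {ω | x < X ⟨0, by omega⟩ ω ∧ s < W ⟨0, by omega⟩ ω}).toReal ^ (n - r) *
          ∫ y in Set.Ioi s, f x y := by
  set ν := (volume : Measure (ℝ × ℝ)).withDensity fun p => ENNReal.ofReal (f p.1 p.2) with hν
  set i₀ : Fin n := ⟨0, by omega⟩
  have hY : ∀ i, Measurable fun ω => (X i ω, W i ω) := fun i => (hXmeas i).prodMk (hWmeas i)
  have hlaw₀ : ∀ {A}, MeasurableSet A →
      μ ((fun ω => (X i₀ ω, W i₀ ω)) ⁻¹' A) = ν A :=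
    fun hA => by rw [← hlaw i₀, Measure.map_apply (hY i₀) hA]
  have hF : ∀ x, μ {ω | X i₀ ω < x} = ν {q | q.1 < x} :=
    fun x => hlaw₀ (measurableSet_lt measurable_fst measurable_const)
  have hG : ∀ x, μ {ω | x < X i₀ ω ∧ s < W i₀ ω} = ν {q | x < q.1 ∧ s < q.2} :=
    fun x => hlaw₀ ((measurableSet_lt measurable_const measurable_fst).inter
      (measurableSet_lt measurable_const measurable_snd))
  have : IsProbabilityMeasure ν :=
    hlaw i₀ ▸ Measure.isProbabilityMeasure_map (hY i₀).aemeasurable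
  have hmap : μ.map (fun ω i => (X i ω, W i ω)) = Measure.pi fun _ => ν := by
    rw [(iIndepFun_iff_map_fun_eq_pi_map fun i => (hY i).aemeasurable).1 hindep]
    simp only [hlaw]
  have hevent : {ω | s < concomMin (fun i => X i ω) (fun i => W i ω * φ 0) r}
      = (fun ω i => (X i ω, W i ω)) ⁻¹' concomEvent n r s := by
    ext ω
    simp only [hφ0, mul_one]
    exact lt_concomMin_iff_mem_concomEvent hr hrn s fun i => (X i ω, W i ω)
  have hneg : ν {q | q.1 < 0} = 0 := by
    simpa [← hF] using ae_iff.1 (hX_nonneg i₀)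
  rw [hevent, ← Measure.map_apply (measurable_pi_lambda _ hY) (measurableSet_concomEvent s), hmap,
    pi_concomEvent ν (withDensity_volume_setOf_fst_eq _) hr hrn, ENNReal.toReal_mul,
    ENNReal.toReal_mul, ENNReal.toReal_natCast, ENNReal.toReal_natCast,
    toReal_setLIntegral_setOf_lt_snd hf_meas hf_nonneg hν hneg]
  simp only [hF, hG]
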